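/- arXiv:2009.08335 — 2 statements merged into one kernel-verified Lean document; each statement's English description precedes it below -/
import Mathlib

section
/- Let f : ℝ^n → ℝ be μ-strongly convex and L-smooth, and A ∈ ℝ^{p×n}. Then the function d(w) = f*(Aᵀw), where f* is the convex conjugate of f, is differentiable and λ_max(AAᵀ)/μ-smooth, and it is λ_min(AAᵀ)/L-strongly convex. -/
open scoped RealInnerProductSpace

def IsSmoothFn {n : ℕ} (L : ℝ) (f : EuclideanSpace ℝ (Fin n) → ℝ) : Prop :=
  ∃ f' : EuclideanSpace ℝ (Fin n) → EuclideanSpace ℝ (Fin n),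
    (∀ x, HasGradientAt f (f' x) x) ∧ LipschitzWith L.toNNReal f'

noncomputable def conjFn {n : ℕ} (f : EuclideanSpace ℝ (Fin n) → ℝ)
    (w : EuclideanSpace ℝ (Fin n)) : ℝ :=
  ⨆ x, ⟪w, x⟫ - f x

/-!
Let `T` be a right inverse of `∇f` (one exists since `f - ⟪y, ·⟫` is coercive). Then `T y`
maximises `⟪y, ·⟫ - f`, so `f*(y) = ⟪y, T y⟫ - f (T y)`, and testing the supremum defining
`f*(z)` at `T y + (z - y) / L` against the descent lemma for `f` gives
`f*(y) + ⟪T y, z - y⟫ + ‖z - y‖² / (2L) ≤ f*(z)`. For `d = f* ∘ Aᵀ` this reads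
`d w + ⟪A T (Aᵀ w), v - w⟫ + ‖Aᵀ (v - w)‖² / (2L) ≤ d v`, and `λ_min ‖u‖² ≤ ‖Aᵀ u‖²` turns it
into strong convexity. Strong convexity of `f` makes `T` `μ⁻¹`-Lipschitz, so `w ↦ A T (Aᵀ w)`
is `‖A‖² / μ ≤ λ_max / μ`-Lipschitz, and a function with a Lipschitz selection of subgradients
is differentiable with that selection as gradient.
-/

open InnerProductSpace Set Filter
open scoped InnerProduct

section NormedSpace

variable {E : Type*} [NormedAddCommGroup E] [NormedSpace ℝ E]

lemma ConvexOn.add_le_of_hasFDerivAt {g : E → ℝ} {g' : E →L[ℝ] ℝ} {x : E}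
    (hc : ConvexOn ℝ univ g) (hx : HasFDerivAt g g' x) (y : E) :
    g x + g' (y - x) ≤ g y := by
  have hline : ConvexOn ℝ univ (g ∘ AffineMap.lineMap (k := ℝ) x y) := hc.comp_affineMap _
  have hderiv : HasDerivAt (g ∘ AffineMap.lineMap (k := ℝ) x y) (g' (y - x)) 0 := by
    refine HasFDerivAt.comp_hasDerivAt (0 : ℝ) ?_ AffineMap.hasDerivAt_lineMap
    simpa using hx
  have := hline.le_slope_of_hasDerivAt (mem_univ 0) (mem_univ 1) one_pos hderiv
  simp only [slope_def_field, Function.comp_apply, AffineMap.lineMap_apply_zero,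
    AffineMap.lineMap_apply_one, sub_zero, div_one] at this
  linarith

end NormedSpace

section InnerProductSpace

variable {E : Type*} [NormedAddCommGroup E] [InnerProductSpace ℝ E] {f : E → ℝ} {f' : E → E}

lemma strongConvexOn_univ_of_add_inner_add_sq_le {c : ℝ}
    (h : ∀ x y, f x + ⟪f' x, y - x⟫ + c / 2 * ‖y - x‖ ^ 2 ≤ f y) :
    StrongConvexOn univ c f := by
  refine ⟨convex_univ, ?_⟩
  rintro x - y - a b ha hb hab
  obtain rfl : b = 1 - a := by linarith
  set z := a • x + (1 - a) • y
  have hxz : x - z = (1 - a) • (x - y) := by module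
  have hyz : y - z = -(a • (x - y)) := by module
  have hx := h z x
  have hy := h z y
  rw [hxz, inner_smul_right, norm_smul, Real.norm_of_nonneg hb] at hx
  rw [hyz, inner_neg_right, inner_smul_right, norm_neg, norm_smul, Real.norm_of_nonneg ha] at hy
  have := add_le_add (mul_le_mul_of_nonneg_left hx ha) (mul_le_mul_of_nonneg_left hy hb)
  simp only [smul_eq_mul]
  linarith

end InnerProductSpace

section HilbertSpace

variable {E : Type*} [NormedAddCommGroup E] [InnerProductSpace ℝ E] [CompleteSpace E]
  {f : E → ℝ} {f' : E → E} {μ L : ℝ}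

lemma ConvexOn.add_inner_le_of_hasGradientAt {x g : E} (hc : ConvexOn ℝ univ f)
    (hx : HasGradientAt f g x) (y : E) : f x + ⟪g, y - x⟫ ≤ f y := by
  simpa using hc.add_le_of_hasFDerivAt hx.hasFDerivAt y

lemma ConvexOn.isGreatest_inner_sub_of_hasGradientAt {x y : E} (hc : ConvexOn ℝ univ f)
    (hx : HasGradientAt f y x) : IsGreatest (range fun z => ⟪y, z⟫ - f z) (⟪y, x⟫ - f x) := by
  refine ⟨⟨x, rfl⟩, ?_⟩
  rintro _ ⟨z, rfl⟩
  have := hc.add_inner_le_of_hasGradientAt hx z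
  rw [inner_sub_right] at this
  linarith

lemma StrongConvexOn.add_inner_add_sq_le_of_hasGradientAt {x g : E}
    (hsc : StrongConvexOn univ μ f) (hx : HasGradientAt f g x) (y : E) :
    f x + ⟪g, y - x⟫ + μ / 2 * ‖y - x‖ ^ 2 ≤ f y := by
  have hd := hx.hasFDerivAt.sub ((hasStrictFDerivAt_norm_sq x).hasFDerivAt.const_mul (μ / 2))
  have := (strongConvexOn_iff_convex.mp hsc).add_le_of_hasFDerivAt hd y
  have hx2 : ⟪x, y - x⟫ = ⟪y, x⟫ - ‖x‖ ^ 2 := by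
    rw [inner_sub_right, real_inner_self_eq_norm_sq, real_inner_comm]
  simp only [sub_apply, toDual_apply_apply, smul_apply, innerSL_apply_apply, smul_eq_mul,
    nsmul_eq_mul, Nat.cast_ofNat, hx2] at this
  rw [norm_sub_sq_real]
  linarith

lemma StrongConvexOn.mul_sq_le_inner_sub_of_hasGradientAt {x y gx gy : E}
    (hsc : StrongConvexOn univ μ f) (hx : HasGradientAt f gx x) (hy : HasGradientAt f gy y) :
    μ * ‖y - x‖ ^ 2 ≤ ⟪gy - gx, y - x⟫ := by
  have hxy := hsc.add_inner_add_sq_le_of_hasGradientAt hx y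
  have hyx := hsc.add_inner_add_sq_le_of_hasGradientAt hy x
  rw [norm_sub_rev x y, ← neg_sub y x, inner_neg_right] at hyx
  rw [inner_sub_left]
  linarith

lemma StrongConvexOn.lipschitzWith_of_rightInverse {T : E → E} (hμ : 0 < μ)
    (hsc : StrongConvexOn univ μ f) (hf : ∀ x, HasGradientAt f (f' x) x)
    (hT : Function.RightInverse T f') : LipschitzWith μ⁻¹.toNNReal T := by
  refine LipschitzWith.of_dist_le' fun y z => ?_
  have hmono := hsc.mul_sq_le_inner_sub_of_hasGradientAt (hf (T z)) (hf (T y))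
  rw [hT y, hT z] at hmono
  have hcs := real_inner_le_norm (y - z) (T y - T z)
  rw [dist_eq_norm, dist_eq_norm, le_inv_mul_iff₀ hμ]
  rcases (norm_nonneg (T y - T z)).eq_or_lt with h0 | hpos
  · rw [← h0, mul_zero]; exact norm_nonneg _
  · nlinarith

lemma le_add_inner_add_sq_of_lipschitzWith (hL : 0 ≤ L) (hf : ∀ x, HasGradientAt f (f' x) x)
    (hlip : LipschitzWith L.toNNReal f') (x y : E) :
    f y ≤ f x + ⟪f' x, y - x⟫ + L / 2 * ‖y - x‖ ^ 2 := by
  let γ : ℝ →ᵃ[ℝ] E := AffineMap.lineMap x y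
  have hline : ∀ t, HasDerivAt (f ∘ γ) ⟪f' (γ t), y - x⟫ t := fun t => by
    simpa using (hf _).hasFDerivAt.comp_hasDerivAt t AffineMap.hasDerivAt_lineMap
  have hparab : ∀ t : ℝ, HasDerivAt (fun t => f x + t * ⟪f' x, y - x⟫ + L / 2 * t ^ 2 * ‖y - x‖ ^ 2)
      (⟪f' x, y - x⟫ + L * t * ‖y - x‖ ^ 2) t := fun t => by
    have hlin : HasDerivAt (fun t => t * ⟪f' x, y - x⟫) ⟪f' x, y - x⟫ t := by
      simpa using (hasDerivAt_id t).mul_const ⟪f' x, y - x⟫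
    have hquad : HasDerivAt (fun t => L / 2 * t ^ 2 * ‖y - x‖ ^ 2) (L * t * ‖y - x‖ ^ 2) t :=
      (((hasDerivAt_pow 2 t).const_mul (L / 2)).mul_const _).congr_deriv (by
        simp only [Nat.cast_ofNat, Nat.add_one_sub_one, pow_one]; ring)
    exact (hlin.const_add (f x)).add hquad
  have hbound : ∀ t ∈ Ico (0 : ℝ) 1,
      ⟪f' (γ t), y - x⟫ ≤ ⟪f' x, y - x⟫ + L * t * ‖y - x‖ ^ 2 := by
    rintro t ⟨ht, -⟩
    have hcs := real_inner_le_norm (f' (γ t) - f' x) (y - x)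
    have hl := hlip.dist_le_mul (γ t) x
    have hseg : γ t - x = t • (y - x) := by simp [γ, AffineMap.lineMap_apply_module']
    rw [dist_eq_norm, dist_eq_norm, Real.coe_toNNReal L hL, hseg, norm_smul,
      Real.norm_of_nonneg ht] at hl
    rw [inner_sub_left] at hcs
    nlinarith [norm_nonneg (y - x)]
  have := image_le_of_deriv_right_le_deriv_boundary (a := 0) (b := 1)
    (fun t _ => (hline t).continuousAt.continuousWithinAt) (fun t _ => (hline t).hasDerivWithinAt)
    (by simp [γ]) (fun t _ => (hparab t).continuousAt.continuousWithinAt)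
    (fun t _ => (hparab t).hasDerivWithinAt) hbound (right_mem_Icc.mpr zero_le_one)
  simpa [γ] using this

lemma hasGradientAt_of_add_inner_le_of_lipschitzWith {K : NNReal}
    (h : ∀ x y, f x + ⟪f' x, y - x⟫ ≤ f y) (hK : LipschitzWith K f') (x : E) :
    HasGradientAt f (f' x) x := by
  -- the remainder lies between `0` and `⟪f' y - f' x, y - x⟫ ≤ K ‖y - x‖²`
  have hbound : ∀ y, ‖f y - f x - ⟪f' x, y - x⟫‖ ≤ K * ‖‖y - x‖ ^ 2‖ := fun y => by
    have hxy := h x y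
    have hyx := h y x
    have hcs := real_inner_le_norm (f' y - f' x) (y - x)
    have hl := hK.dist_le_mul y x
    rw [dist_eq_norm, dist_eq_norm] at hl
    rw [← neg_sub y x, inner_neg_right] at hyx
    rw [inner_sub_left] at hcs
    rw [Real.norm_of_nonneg (by linarith), norm_pow, norm_norm]
    nlinarith [norm_nonneg (y - x)]
  rw [hasGradientAt_iff_isLittleO]
  exact (Asymptotics.isBigO_of_le' _ hbound).trans_isLittleO
    (Asymptotics.isLittleO_pow_sub_sub x one_lt_two)

variable {F : Type*} [NormedAddCommGroup F] [InnerProductSpace ℝ F] [CompleteSpace F]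

lemma LipschitzWith.adjoint_comp_comp {K C : ℝ} {T : E → E} (hK : 0 ≤ K)
    (hT : LipschitzWith K.toNNReal T) (B : F →L[ℝ] E) (hB : ‖B‖ ^ 2 ≤ C) :
    LipschitzWith (C * K).toNNReal fun w => (B†) (T (B w)) := by
  refine LipschitzWith.of_dist_le' fun v w => ?_
  have hTd := hT.dist_le_mul (B v) (B w)
  have hBd := B.lipschitz.dist_le_mul v w
  have hB'd := (B†).lipschitz.dist_le_mul (T (B v)) (T (B w))
  rw [Real.coe_toNNReal _ hK] at hTd
  rw [coe_nnnorm] at hBd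
  rw [LinearIsometryEquiv.nnnorm_map, coe_nnnorm] at hB'd
  calc dist ((B†) (T (B v))) ((B†) (T (B w))) ≤ ‖B‖ * (K * (‖B‖ * dist v w)) := by
        refine hB'd.trans ?_
        gcongr
        exact hTd.trans (mul_le_mul_of_nonneg_left hBd hK)
    _ = ‖B‖ ^ 2 * K * dist v w := by ring
    _ ≤ C * K * dist v w := by gcongr

end HilbertSpace

section FiniteDimensional

variable {E : Type*} [NormedAddCommGroup E] [InnerProductSpace ℝ E] [FiniteDimensional ℝ E]
  {f : E → ℝ} {f' : E → E} {μ : ℝ}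

lemma StrongConvexOn.surjective_of_hasGradientAt (hμ : 0 < μ) (hsc : StrongConvexOn univ μ f)
    (hf : ∀ x, HasGradientAt f (f' x) x) : Function.Surjective f' := by
  intro y
  set g : E → ℝ := fun z => f z - ⟪y, z⟫
  set c := ‖f' 0 - y‖
  have hgrad : ∀ z, HasGradientAt g (f' z - y) z := fun z => by
    rw [hasGradientAt_iff_hasFDerivAt, map_sub]
    exact (hf z).hasFDerivAt.sub (toDual ℝ E y).hasFDerivAt
  have hcont : Continuous g := continuous_iff_continuousAt.mpr fun z => (hgrad z).continuousAt
  have hlower : ∀ z, f 0 - c * ‖z‖ + μ / 2 * ‖z‖ ^ 2 ≤ g z := fun z => by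
    have h0 := hsc.add_inner_add_sq_le_of_hasGradientAt (hf 0) z
    have hcs := neg_le_of_abs_le (abs_real_inner_le_norm (f' 0 - y) z)
    rw [inner_sub_left] at hcs
    simp only [sub_zero] at h0
    simp only [g]
    linarith
  have hquad : Tendsto (fun r : ℝ => f 0 - c * r + μ / 2 * r ^ 2) atTop atTop := by
    have : Tendsto (fun r : ℝ => r * (μ / 2 * r - c)) atTop atTop :=
      tendsto_id.atTop_mul_atTop₀ (tendsto_atTop_add_const_right _ _
        (tendsto_id.const_mul_atTop (half_pos hμ)))
    convert tendsto_atTop_add_const_left _ (f 0) this using 2 with r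
    ring
  obtain ⟨x, hx⟩ := hcont.exists_forall_le
    (tendsto_atTop_mono hlower (hquad.comp tendsto_norm_cocompact_atTop))
  refine ⟨x, ?_⟩
  have := (IsLocalMin.hasFDerivAt_eq_zero (Eventually.of_forall hx) (hgrad x).hasFDerivAt)
  rwa [map_eq_zero_iff _ (toDual ℝ E).injective, sub_eq_zero] at this

end FiniteDimensional

section ConvexConjugate

variable {n : ℕ} {f : EuclideanSpace ℝ (Fin n) → ℝ}
  {f' T : EuclideanSpace ℝ (Fin n) → EuclideanSpace ℝ (Fin n)} {L : ℝ}

lemma conjFn_eq_of_hasGradientAt {x y : EuclideanSpace ℝ (Fin n)} (hc : ConvexOn ℝ univ f)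
    (hx : HasGradientAt f y x) : conjFn f y = ⟪y, x⟫ - f x :=
  (hc.isGreatest_inner_sub_of_hasGradientAt hx).csSup_eq

lemma conjFn_add_inner_add_sq_le (hL : 0 < L) (hc : ConvexOn ℝ univ f)
    (hf : ∀ x, HasGradientAt f (f' x) x) (hlip : LipschitzWith L.toNNReal f')
    (hT : Function.RightInverse T f') (y z : EuclideanSpace ℝ (Fin n)) :
    conjFn f y + ⟪T y, z - y⟫ + 1 / (2 * L) * ‖z - y‖ ^ 2 ≤ conjFn f z := by
  have hgrad : ∀ y, HasGradientAt f y (T y) := fun y => by simpa only [hT y] using hf (T y)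
  set x := T y + L⁻¹ • (z - y)
  have hdesc := le_add_inner_add_sq_of_lipschitzWith hL.le hf hlip (T y) x
  have hmax := (hc.isGreatest_inner_sub_of_hasGradientAt (hgrad z)).2 ⟨x, rfl⟩
  rw [← conjFn_eq_of_hasGradientAt hc (hgrad z)] at hmax
  rw [conjFn_eq_of_hasGradientAt hc (hgrad y)]
  rw [hT y, add_sub_cancel_left, inner_smul_right, norm_smul, mul_pow,
    Real.norm_of_nonneg (inv_nonneg.mpr hL.le)] at hdesc
  have hzx : ⟪z, x⟫ = ⟪z, T y⟫ + L⁻¹ * ⟪z, z - y⟫ := by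
    rw [inner_add_right, inner_smul_right]
  have hzy : L⁻¹ * ⟪z, z - y⟫ - L⁻¹ * ⟪y, z - y⟫ = L⁻¹ * ‖z - y‖ ^ 2 := by
    rw [← mul_sub, ← inner_sub_left, real_inner_self_eq_norm_sq]
  have hTy : ⟪T y, z - y⟫ = ⟪z, T y⟫ - ⟪y, T y⟫ := by
    rw [inner_sub_right, real_inner_comm z, real_inner_comm y]
  have hcoef : L / 2 * (L⁻¹ ^ 2 * ‖z - y‖ ^ 2)
      = L⁻¹ * ‖z - y‖ ^ 2 - 1 / (2 * L) * ‖z - y‖ ^ 2 := by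
    field_simp; ring
  simp only at hmax
  linarith

end ConvexConjugate

namespace Matrix

section Spectral

variable {ι : Type*} [Fintype ι] [DecidableEq ι] {M : Matrix ι ι ℝ}

lemma IsHermitian.inner_toEuclideanLin_self_eq_sum (hM : M.IsHermitian)
    (v : EuclideanSpace ℝ ι) :
    ⟪v, toEuclideanLin M v⟫ = ∑ j, hM.eigenvalues j * ⟪hM.eigenvectorBasis j, v⟫ ^ 2 := by
  have hsym := isSymmetric_toEuclideanLin_iff.mpr hM
  have heig : ∀ j, toEuclideanLin M (hM.eigenvectorBasis j)
      = hM.eigenvalues j • hM.eigenvectorBasis j := fun j => by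
    apply WithLp.ofLp_injective
    simpa using hM.mulVec_eigenvectorBasis j
  rw [← hM.eigenvectorBasis.sum_inner_mul_inner v]
  refine Finset.sum_congr rfl fun j _ => ?_
  rw [← hsym, heig, real_inner_smul_left, real_inner_comm v]
  ring

lemma IsHermitian.iInf_eigenvalues_mul_norm_sq_le (hM : M.IsHermitian)
    (v : EuclideanSpace ℝ ι) :
    (⨅ i, hM.eigenvalues i) * ‖v‖ ^ 2 ≤ ⟪v, toEuclideanLin M v⟫ := by
  rw [hM.inner_toEuclideanLin_self_eq_sum, ← hM.eigenvectorBasis.sum_sq_inner_right v,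
    Finset.mul_sum]
  exact Finset.sum_le_sum fun j _ => mul_le_mul_of_nonneg_right
    (ciInf_le (finite_range _).bddBelow j) (sq_nonneg _)

lemma IsHermitian.inner_toEuclideanLin_self_le (hM : M.IsHermitian)
    (v : EuclideanSpace ℝ ι) :
    ⟪v, toEuclideanLin M v⟫ ≤ (⨆ i, hM.eigenvalues i) * ‖v‖ ^ 2 := by
  rw [hM.inner_toEuclideanLin_self_eq_sum, ← hM.eigenvectorBasis.sum_sq_inner_right v,
    Finset.mul_sum]
  exact Finset.sum_le_sum fun j _ => mul_le_mul_of_nonneg_right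
    (le_ciSup (finite_range _).bddAbove j) (sq_nonneg _)

end Spectral

variable {m ι : Type*} [Fintype m] [DecidableEq m] [Fintype ι] [DecidableEq ι]

lemma norm_toEuclideanLin_transpose_apply_sq (A : Matrix m ι ℝ) (w : EuclideanSpace ℝ m) :
    ‖toEuclideanLin A.transpose w‖ ^ 2 = ⟪w, toEuclideanLin (A * A.transpose) w⟫ := by
  have hadj : LinearMap.adjoint (toEuclideanLin A.transpose) = toEuclideanLin A := by
    rw [← toEuclideanLin_conjTranspose_eq_adjoint, conjTranspose_eq_transpose_of_trivial,
      transpose_transpose]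
  rw [← real_inner_self_eq_norm_sq, ← LinearMap.adjoint_inner_right, hadj]
  simp [toLpLin_apply, mulVec_mulVec]

lemma opNorm_toEuclideanLin_transpose_sq_le (A : Matrix m ι ℝ)
    (hH : (A * A.transpose).IsHermitian) :
    ‖LinearMap.toContinuousLinearMap (toEuclideanLin A.transpose)‖ ^ 2
      ≤ ⨆ i, hH.eigenvalues i := by
  set B := LinearMap.toContinuousLinearMap (toEuclideanLin A.transpose)
  set lam := ⨆ i, hH.eigenvalues i
  have hpsd : (A * A.transpose).PosSemidef := by
    simpa using A.posSemidef_self_mul_conjTranspose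
  have hlam : 0 ≤ lam := Real.iSup_nonneg hpsd.eigenvalues_nonneg
  have hnorm := B.opNorm_le_bound (Real.sqrt_nonneg lam) fun w => by
    rw [← Real.sqrt_sq (norm_nonneg w), ← Real.sqrt_mul hlam]
    refine Real.le_sqrt_of_sq_le ?_
    exact (A.norm_toEuclideanLin_transpose_apply_sq w).trans_le (hH.inner_toEuclideanLin_self_le w)
  calc _ ≤ Real.sqrt lam ^ 2 := pow_le_pow_left₀ (norm_nonneg _) hnorm 2
    _ = lam := Real.sq_sqrt hlam

end Matrix

theorem dual_function_properties {n p : ℕ} (f : EuclideanSpace ℝ (Fin n) → ℝ)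
    (μ L : ℝ) (hμ : 0 < μ) (hL : 0 < L)
    (hsc : StrongConvexOn Set.univ μ f) (hsm : IsSmoothFn L f)
    (A : Matrix (Fin p) (Fin n) ℝ)
    (hH : (A * A.transpose).IsHermitian)
    -- the dual function d(w) = f*(Aᵀ w)
    (d : EuclideanSpace ℝ (Fin p) → ℝ)
    (hd : ∀ w, d w = conjFn f
      ((WithLp.equiv 2 (Fin n → ℝ)).symm (A.transpose.mulVec (WithLp.equiv 2 (Fin p → ℝ) w)))) :
    Differentiable ℝ d ∧
    IsSmoothFn ((⨆ i, hH.eigenvalues i) / μ) d ∧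
    StrongConvexOn Set.univ ((⨅ i, hH.eigenvalues i) / L) d := by
  obtain ⟨f', hf, hlip⟩ := hsm
  obtain ⟨T, hT⟩ := (hsc.surjective_of_hasGradientAt hμ hf).hasRightInverse
  set B := LinearMap.toContinuousLinearMap (Matrix.toEuclideanLin A.transpose)
  have hdB : ∀ w, d w = conjFn f (B w) := hd
  have hlower : ∀ w v, d w + ⟪(B†) (T (B w)), v - w⟫ + 1 / (2 * L) * ‖B (v - w)‖ ^ 2 ≤ d v :=
    fun w v => by
      simpa only [hdB, map_sub, ContinuousLinearMap.adjoint_inner_left] using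
        conjFn_add_inner_add_sq_le hL (hsc.convexOn fun r => by positivity) hf hlip hT (B w) (B v)
  have hlip' : LipschitzWith ((⨆ i, hH.eigenvalues i) / μ).toNNReal fun w => (B†) (T (B w)) := by
    rw [div_eq_mul_inv]
    exact (hsc.lipschitzWith_of_rightInverse hμ hf hT).adjoint_comp_comp (inv_nonneg.mpr hμ.le) B
      (A.opNorm_toEuclideanLin_transpose_sq_le hH)
  have hgrad : ∀ w, HasGradientAt d ((B†) (T (B w))) w :=
    hasGradientAt_of_add_inner_le_of_lipschitzWith
      (fun w v => (hlower w v).trans' (le_add_of_nonneg_right (by positivity))) hlip'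
  refine ⟨fun w => (hgrad w).differentiableAt, ⟨_, hgrad, hlip'⟩,
    strongConvexOn_univ_of_add_inner_add_sq_le (f' := fun w => (B†) (T (B w)))
      fun w v => (hlower w v).trans' ?_⟩
  have hBv : (⨅ i, hH.eigenvalues i) * ‖v - w‖ ^ 2 ≤ ‖B (v - w)‖ ^ 2 :=
    A.norm_toEuclideanLin_transpose_apply_sq (v - w) ▸ hH.iInf_eigenvalues_mul_norm_sq_le (v - w)
  rw [show (⨅ i, hH.eigenvalues i) / L / 2 * ‖v - w‖ ^ 2
    = 1 / (2 * L) * ((⨅ i, hH.eigenvalues i) * ‖v - w‖ ^ 2) by ring]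
  gcongr
end

section
/- For the Peaceman–Rachford/ADMM recursion applied to the regularized dual, the x-update x = argmin_x { f(x) + (ρδ/2)‖Ax − z/ρ‖² } together with w = δ(z − ρAx), where δ = 1/(1+ερ), computes exactly w = prox_{ρ d_ε}(z) for d_ε(w) = (ε/2)‖w‖² + f*(Aᵀw), provided f is strongly convex and smooth. -/
/-!
The optimality condition of the x-update says that `Aᵀw` is a `μ`-strong subgradient of `f` at
`x`. By Fenchel–Young this gives `f*(Aᵀw) = ⟪w, Ax⟫ - f x`, and `f*(Aᵀv) ≥ ⟪v, Ax⟫ - f x` for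
every `v`, the supremum defining `f*` being finite because `f` is strongly convex. So the prox
objective dominates the quadratic `ε/2 ‖v‖² + ⟪v, Ax⟫ + ‖v - z‖²/(2ρ) - f x`, with equality at
`w`, and `w` minimizes this quadratic because `(1 + ερ) w = z - ρ Ax`.
-/

open scoped RealInnerProductSpace

noncomputable def mulVecE {p n : ℕ} (M : Matrix (Fin p) (Fin n) ℝ)
    (v : EuclideanSpace ℝ (Fin n)) : EuclideanSpace ℝ (Fin p) :=
  (WithLp.equiv 2 (Fin p → ℝ)).symm (M.mulVec (WithLp.equiv 2 (Fin n → ℝ) v))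

open Set Filter Topology

section InnerProductSpace

variable {E : Type*} [NormedAddCommGroup E] [InnerProductSpace ℝ E]

def HasStrongSubgradientAt (f : E → ℝ) (μ : ℝ) (s x : E) : Prop :=
  ∀ y, f x + ⟪s, y - x⟫ + μ / 2 * ‖y - x‖ ^ 2 ≤ f y

theorem StrongConvexOn.hasStrongSubgradientAt_of_isMinOn_add {f g : E → ℝ} {μ : ℝ} {s x : E}
    (hf : StrongConvexOn univ μ f) (hg : HasFDerivAt g (-innerSL ℝ s) x)
    (hx : IsMinOn (f + g) univ x) : HasStrongSubgradientAt f μ s x := by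
  intro y
  set d := y - x
  have hslope : Tendsto (fun t : ℝ => -(t⁻¹ • (g (x + t • d) - g x))) (𝓝[>] 0) (𝓝 ⟪s, d⟫) := by
    simpa using ((hg.hasLineDerivAt d).tendsto_slope_zero_right).neg
  have hbound : Tendsto (fun t : ℝ => f y - f x - (1 - t) * (μ / 2 * ‖d‖ ^ 2)) (𝓝[>] 0)
      (𝓝 (f y - f x - μ / 2 * ‖d‖ ^ 2)) := by
    refine tendsto_nhdsWithin_of_tendsto_nhds ?_
    exact (Continuous.tendsto' (by fun_prop) 0 _ (by simp))
  have hle : ∀ᶠ t in 𝓝[>] (0 : ℝ), -(t⁻¹ • (g (x + t • d) - g x)) ≤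
      f y - f x - (1 - t) * (μ / 2 * ‖d‖ ^ 2) := by
    filter_upwards [Ioo_mem_nhdsGT one_pos] with t ⟨ht0, ht1⟩
    have hconv := hf.2 (mem_univ x) (mem_univ y) (sub_nonneg.2 ht1.le) ht0.le (sub_add_cancel 1 t)
    have hmin : f x + g x ≤ f (x + t • d) + g (x + t • d) := hx (mem_univ _)
    have hpt : (1 - t) • x + t • y = x + t • d := by module
    rw [hpt, norm_sub_rev] at hconv
    simp only [smul_eq_mul] at hconv
    have key : g x - g (x + t • d) ≤ t * (f y - f x - (1 - t) * (μ / 2 * ‖d‖ ^ 2)) := by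
      linarith
    rw [smul_eq_mul, ← mul_neg, neg_sub, inv_mul_le_iff₀ ht0]
    exact key
  linarith [le_of_tendsto_of_tendsto hslope hbound hle]

theorem inner_sub_half_mul_norm_sq_le {μ : ℝ} (hμ : 0 < μ) (a b : E) :
    ⟪a, b⟫ - μ / 2 * ‖b‖ ^ 2 ≤ ‖a‖ ^ 2 / (2 * μ) := by
  have h := norm_sub_sq_real a (μ • b)
  rw [real_inner_smul_right, norm_smul, Real.norm_of_nonneg hμ.le] at h
  rw [le_div_iff₀ (by positivity)]
  nlinarith [sq_nonneg ‖a - μ • b‖]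

theorem isMinOn_half_mul_norm_sq_add_inner_add_norm_sub_sq_div {ε ρ : ℝ} (hρ : 0 < ρ)
    (hερ : 0 ≤ 1 + ε * ρ) {q z w : E} (hw : (1 + ε * ρ) • w = z - ρ • q) :
    IsMinOn (fun v => ε / 2 * ‖v‖ ^ 2 + ⟪v, q⟫ + ‖v - z‖ ^ 2 / (2 * ρ)) univ w := by
  intro v _
  obtain ⟨d, rfl⟩ : ∃ d, v = w + d := ⟨v - w, by abel⟩
  have hd : (1 + ε * ρ) * ⟪w, d⟫ = ⟪z, d⟫ - ρ * ⟪d, q⟫ := by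
    rw [← real_inner_smul_left, hw, inner_sub_left, real_inner_smul_left, real_inner_comm q d]
  have hexp : ‖w + d - z‖ ^ 2 = ‖w - z‖ ^ 2 + 2 * ⟪w - z, d⟫ + ‖d‖ ^ 2 := by
    rw [add_sub_right_comm, norm_add_sq_real]
  simp only [mem_ofPred_eq]
  rw [norm_add_sq_real, hexp, inner_add_left, inner_sub_left]
  have : 0 ≤ (1 + ε * ρ) * ‖d‖ ^ 2 := by positivity
  field_simp
  linear_combination this - 2 * hd

namespace HasStrongSubgradientAt

variable {f : E → ℝ} {μ : ℝ} {s x : E}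

theorem inner_sub_le (hμ : 0 ≤ μ) (h : HasStrongSubgradientAt f μ s x) (y : E) :
    ⟪s, y⟫ - f y ≤ ⟪s, x⟫ - f x := by
  have := h y
  rw [inner_sub_right] at this
  nlinarith [sq_nonneg ‖y - x‖]

theorem bddAbove_range_inner_sub (hμ : 0 < μ) (h : HasStrongSubgradientAt f μ s x) (s' : E) :
    BddAbove (range fun y => ⟪s', y⟫ - f y) := by
  refine ⟨⟪s', x⟫ - f x + ‖s' - s‖ ^ 2 / (2 * μ), forall_mem_range.2 fun y => ?_⟩
  have hy := h y
  have hquad := inner_sub_half_mul_norm_sq_le hμ (s' - s) (y - x)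
  rw [inner_sub_left, inner_sub_right, inner_sub_right] at hquad
  rw [inner_sub_right] at hy
  linarith

end HasStrongSubgradientAt

end InnerProductSpace

section EuclideanSpace

variable {n : ℕ} {f : EuclideanSpace ℝ (Fin n) → ℝ}

theorem inner_sub_le_conjFn {s : EuclideanSpace ℝ (Fin n)}
    (hf : BddAbove (range fun y => ⟪s, y⟫ - f y)) (x : EuclideanSpace ℝ (Fin n)) :
    ⟪s, x⟫ - f x ≤ conjFn f s :=
  le_ciSup hf x

theorem HasStrongSubgradientAt.conjFn_eq {μ : ℝ} {s x : EuclideanSpace ℝ (Fin n)} (hμ : 0 ≤ μ)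
    (h : HasStrongSubgradientAt f μ s x) : conjFn f s = ⟪s, x⟫ - f x :=
  le_antisymm (ciSup_le (h.inner_sub_le hμ))
    (inner_sub_le_conjFn ⟨_, forall_mem_range.2 (h.inner_sub_le hμ)⟩ x)

theorem inner_mulVecE_transpose {p : ℕ} (A : Matrix (Fin p) (Fin n) ℝ)
    (v : EuclideanSpace ℝ (Fin p)) (y : EuclideanSpace ℝ (Fin n)) :
    ⟪mulVecE A.transpose v, y⟫ = ⟪v, mulVecE A y⟫ := by
  simp [mulVecE, EuclideanSpace.inner_eq_star_dotProduct, Matrix.dotProduct_mulVec,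
    Matrix.mulVec_transpose, dotProduct_comm]

theorem mulVecE_eq_toLpLin {p : ℕ} (A : Matrix (Fin p) (Fin n) ℝ) :
    mulVecE A = Matrix.toLpLin 2 2 A := rfl

theorem hasFDerivAt_half_mul_norm_mulVecE_sub_sq {p : ℕ} (A : Matrix (Fin p) (Fin n) ℝ) (c : ℝ)
    (u : EuclideanSpace ℝ (Fin p)) (x : EuclideanSpace ℝ (Fin n)) :
    HasFDerivAt (fun x' => c / 2 * ‖mulVecE A x' - u‖ ^ 2)
      (-innerSL ℝ (mulVecE A.transpose (c • (u - mulVecE A x)))) x := by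
  rw [mulVecE_eq_toLpLin]
  have hA := (LinearMap.toContinuousLinearMap (Matrix.toLpLin 2 2 A)).hasFDerivAt (x := x)
  refine ((hA.sub_const u).norm_sq.const_mul (c / 2)).congr_fderiv ?_
  ext d
  simp only [LinearMap.coe_toContinuousLinearMap', ← mulVecE_eq_toLpLin, map_sub,
    ContinuousLinearMap.sub_comp, smul_apply, sub_apply, ContinuousLinearMap.comp_apply,
    coe_innerSL_apply, nsmul_eq_mul, Nat.cast_ofNat, smul_eq_mul, neg_apply,
    inner_mulVecE_transpose, real_inner_smul_left, inner_sub_left]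
  ring

end EuclideanSpace

theorem x_update_computes_prox_general {n p : ℕ}
    (f : EuclideanSpace ℝ (Fin n) → ℝ)
    (μ : ℝ) (hμ : 0 < μ)
    (hsc : StrongConvexOn Set.univ μ f)
    (A : Matrix (Fin p) (Fin n) ℝ)
    (ρ ε δ : ℝ) (hρ : 0 < ρ) (hε : 0 < ε) (hδ : δ = 1 / (1 + ε * ρ))
    (z : EuclideanSpace ℝ (Fin p)) (x : EuclideanSpace ℝ (Fin n))
    -- x = argmin_x { f(x) + (ρδ/2)‖Ax − z/ρ‖² }
    (hx : IsMinOn (fun x' => f x' + ρ * δ / 2 * ‖mulVecE A x' - (1 / ρ) • z‖ ^ 2) Set.univ x)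
    (w : EuclideanSpace ℝ (Fin p))
    (hw : w = δ • (z - ρ • mulVecE A x)) :
    -- w = prox_{ρ d_ε}(z) for d_ε(v) = (ε/2)‖v‖² + f*(Aᵀv)
    IsMinOn (fun v => (ε / 2 * ‖v‖ ^ 2 + conjFn f (mulVecE A.transpose v))
      + ‖v - z‖ ^ 2 / (2 * ρ)) Set.univ w := by
  have hερ : 0 < 1 + ε * ρ := by positivity
  have hw' : w = (ρ * δ) • ((1 / ρ) • z - mulVecE A x) := by
    rw [hw]; match_scalars <;> field_simp
  have hsub : HasStrongSubgradientAt f μ (mulVecE A.transpose w) x :=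
    hsc.hasStrongSubgradientAt_of_isMinOn_add
      (hw' ▸ hasFDerivAt_half_mul_norm_mulVecE_sub_sq A (ρ * δ) ((1 / ρ) • z) x) hx
  have hq : (1 + ε * ρ) • w = z - ρ • mulVecE A x := by
    rw [hw, hδ, smul_smul, mul_one_div_cancel hερ.ne', one_smul]
  have hprox := isMinOn_half_mul_norm_sq_add_inner_add_norm_sub_sq_div hρ hερ.le hq
  have hconj_w := hsub.conjFn_eq hμ.le
  rw [inner_mulVecE_transpose] at hconj_w
  intro v _
  have hconj_v := inner_sub_le_conjFn (hsub.bddAbove_range_inner_sub hμ (mulVecE A.transpose v)) x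
  rw [inner_mulVecE_transpose] at hconj_v
  have hv := hprox (mem_univ v)
  simp only [mem_ofPred_eq] at hv ⊢
  linarith

theorem x_update_computes_prox {n p : ℕ}
    (f : EuclideanSpace ℝ (Fin n) → ℝ)
    (μ L : ℝ) (hμ : 0 < μ) (hL : 0 < L)
    (hsc : StrongConvexOn Set.univ μ f) (hsm : IsSmoothFn L f)
    (A : Matrix (Fin p) (Fin n) ℝ)
    (ρ ε δ : ℝ) (hρ : 0 < ρ) (hε : 0 < ε) (hδ : δ = 1 / (1 + ε * ρ))
    (z : EuclideanSpace ℝ (Fin p)) (x : EuclideanSpace ℝ (Fin n))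
    -- x = argmin_x { f(x) + (ρδ/2)‖Ax − z/ρ‖² }
    (hx : IsMinOn (fun x' => f x' + ρ * δ / 2 * ‖mulVecE A x' - (1 / ρ) • z‖ ^ 2) Set.univ x)
    (w : EuclideanSpace ℝ (Fin p))
    (hw : w = δ • (z - ρ • mulVecE A x)) :
    -- w = prox_{ρ d_ε}(z) for d_ε(v) = (ε/2)‖v‖² + f*(Aᵀv)
    IsMinOn (fun v => (ε / 2 * ‖v‖ ^ 2 + conjFn f (mulVecE A.transpose v))
      + ‖v - z‖ ^ 2 / (2 * ρ)) Set.univ w :=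
  x_update_computes_prox_general f μ hμ hsc A ρ ε δ hρ hε hδ z x hx w hw
end
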